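/- Assume b̃ > 0. Then the function α is strictly increasing on [0,T); consequently α(t) ∈ [α(0), 0) for all t ∈ [0,T). -/

import Mathlib

/-!
Put `u = a (T - t)`, which decreases from `aT` to `0` as `t` runs over `[0, T)`. Then
`α = b̃ (1 - ψ(u)) - (δ²/(4a²)) (1 - e^{-u})` with `ψ(u) = u / (1 - e^{-u})`. Both `ψ` and
`1 - e^{-u}` are strictly increasing on `(0, ∞)`; for `ψ` this holds because `1 / ψ(u)` is the
slope of the secant of the strictly concave function `1 - e^{-u}` through the origin. Hence `α`
is strictly increasing in `t`, and it is negative since `ψ(u) > 1` and `1 - e^{-u} > 0`.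
-/

open Real

/-- The separating curve `α(t)`. -/
noncomputable def alphaCurve (a δ b T t : ℝ) : ℝ :=
  (b - δ^2/(2*a^2)) * (1 - a*(T - t)/(1 - Real.exp (-(a*(T - t)))))
    - δ^2/(4*a^2) * (1 - Real.exp (-(a*(T - t))))

open Set

lemma strictConvexOn_exp_neg : StrictConvexOn ℝ univ fun u : ℝ => exp (-u) := by
  refine ⟨convex_univ, fun x _ y _ hxy p q hp hq hpq => ?_⟩
  have h := strictConvexOn_exp.2 (mem_univ (-x)) (mem_univ (-y)) (neg_injective.ne hxy) hp hq hpq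
  simpa only [smul_eq_mul, mul_neg, neg_add] using h

lemma one_sub_exp_neg_pos {u : ℝ} (hu : 0 < u) : 0 < 1 - exp (-u) := by
  linarith [exp_lt_one_iff.mpr (neg_neg_of_pos hu)]

lemma strictMonoOn_div_one_sub_exp_neg :
    StrictMonoOn (fun u : ℝ => u / (1 - exp (-u))) (Ioi 0) := by
  intro x (hx : 0 < x) y (hy : 0 < y) hxy
  have hslope : (exp (-y) - exp (-0)) / (y - 0) > (exp (-x) - exp (-0)) / (x - 0) :=
    strictConvexOn_exp_neg.secant_strict_mono (mem_univ 0) (mem_univ x) (mem_univ y)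
      hx.ne' hy.ne' hxy
  have hsecant : ∀ z : ℝ, (1 - exp (-z)) / z = -((exp (-z) - exp (-0)) / (z - 0)) := fun z => by
    rw [neg_zero, exp_zero, sub_zero, ← neg_div, neg_sub]
  have hslope' : (1 - exp (-y)) / y < (1 - exp (-x)) / x := by
    rw [hsecant, hsecant]
    exact neg_lt_neg hslope
  simpa only [one_div_div] using
    one_div_lt_one_div_of_lt (div_pos (one_sub_exp_neg_pos hy) hy) hslope'

lemma one_lt_div_one_sub_exp_neg {u : ℝ} (hu : 0 < u) : 1 < u / (1 - exp (-u)) := by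
  rw [one_lt_div (one_sub_exp_neg_pos hu)]
  linarith [add_one_lt_exp (neg_ne_zero.mpr hu.ne')]

noncomputable def alphaProfile (β γ u : ℝ) : ℝ :=
  β * (1 - u / (1 - exp (-u))) - γ * (1 - exp (-u))

lemma alphaCurve_eq_alphaProfile (a δ b T t : ℝ) :
    alphaCurve a δ b T t = alphaProfile (b - δ^2/(2*a^2)) (δ^2/(4*a^2)) (a * (T - t)) :=
  rfl

section

variable {β γ : ℝ}

lemma strictAntiOn_alphaProfile (hβ : 0 < β) (hγ : 0 ≤ γ) :
    StrictAntiOn (alphaProfile β γ) (Ioi 0) := by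
  intro x hx y hy hxy
  have hψ := strictMonoOn_div_one_sub_exp_neg hx hy hxy
  have hexp : exp (-y) < exp (-x) := exp_lt_exp.mpr (neg_lt_neg hxy)
  have h₁ : β * (1 - y / (1 - exp (-y))) < β * (1 - x / (1 - exp (-x))) :=
    mul_lt_mul_of_pos_left (by linarith) hβ
  have h₂ : γ * (1 - exp (-x)) ≤ γ * (1 - exp (-y)) :=
    mul_le_mul_of_nonneg_left (by linarith) hγ
  simp only [alphaProfile]
  linarith

lemma alphaProfile_neg (hβ : 0 < β) (hγ : 0 ≤ γ) {u : ℝ} (hu : 0 < u) :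
    alphaProfile β γ u < 0 := by
  have h₁ : β * (1 - u / (1 - exp (-u))) < 0 :=
    mul_neg_of_pos_of_neg hβ (sub_neg.mpr (one_lt_div_one_sub_exp_neg hu))
  have h₂ : 0 ≤ γ * (1 - exp (-u)) := mul_nonneg hγ (one_sub_exp_neg_pos hu).le
  rw [alphaProfile]
  linarith

end

theorem alpha_strictMono_general (a δ b T : ℝ) (ha : 0 < a)
    (hb : 0 < b - δ^2/(2*a^2)) :
    (∀ t₁ t₂ : ℝ, 0 ≤ t₁ → t₁ < t₂ → t₂ < T →
      alphaCurve a δ b T t₁ < alphaCurve a δ b T t₂) ∧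
    (∀ t : ℝ, 0 ≤ t → t < T →
      alphaCurve a δ b T 0 ≤ alphaCurve a δ b T t ∧ alphaCurve a δ b T t < 0) := by
  have hγ : 0 ≤ δ^2/(4*a^2) := by positivity
  have hu : ∀ {t}, t < T → 0 < a * (T - t) := fun ht => mul_pos ha (sub_pos.mpr ht)
  have mono : ∀ t₁ t₂ : ℝ, 0 ≤ t₁ → t₁ < t₂ → t₂ < T →
      alphaCurve a δ b T t₁ < alphaCurve a δ b T t₂ := by
    intro t₁ t₂ _ h₁₂ h₂
    rw [alphaCurve_eq_alphaProfile, alphaCurve_eq_alphaProfile]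
    exact strictAntiOn_alphaProfile hb hγ (hu h₂) (hu (h₁₂.trans h₂))
      (mul_lt_mul_of_pos_left (by linarith) ha)
  refine ⟨mono, fun t ht htT => ⟨?_, ?_⟩⟩
  · rcases ht.eq_or_lt with rfl | ht
    · exact le_rfl
    · exact (mono 0 t le_rfl ht htT).le
  · rw [alphaCurve_eq_alphaProfile]
    exact alphaProfile_neg hb hγ (hu htT)

/-- if `b̃ = b − δ²/(2a²) > 0`, then `α` is strictly increasing on
`[0,T)`; consequently `α(t) ∈ [α(0), 0)` for every `t ∈ [0,T)`. -/
theorem alpha_strictMono (a δ b T : ℝ) (ha : 0 < a) (hδ : 0 < δ) (hT : 0 < T)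
    (hb : 0 < b - δ^2/(2*a^2)) :
    (∀ t₁ t₂ : ℝ, 0 ≤ t₁ → t₁ < t₂ → t₂ < T →
      alphaCurve a δ b T t₁ < alphaCurve a δ b T t₂) ∧
    (∀ t : ℝ, 0 ≤ t → t < T →
      alphaCurve a δ b T 0 ≤ alphaCurve a δ b T t ∧ alphaCurve a δ b T t < 0) :=
  alpha_strictMono_general a δ b T ha hb
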